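/- arXiv:2210.10590 — 2 statements merged into one kernel-verified Lean document; each statement's English description precedes it below -/
import Mathlib

section
/- Let the semistar K_{b_0}(b_1,…,b_k) be recursively partitionable and let G_0,…,G_k be recursively partitionable graphs with n(G_i) = b_i. Then the replacement graph H = G_0 + (G_1 ∪ G_2 ∪ … ∪ G_k), where G_0 is joined completely to the disjoint union of G_1,…,G_k, is recursively partitionable. -/
/-!
Call a vertex set `T` of `H = G₀ + (G₁ ∪ ⋯ ∪ G_k)` matched to an RP vertex set `S` of a join
`K₀ + (K₁ ∪ ⋯ ∪ K_k)` if its traces on `G₀` and on each `Gᵢ` have the sizes of the traces of `S`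
on `K₀` and `Kᵢ`, and each nonempty trace is RP in its own graph. The vertex set of `H` is matched
to that of the semistar, and every matched `T` is RP, by induction on `|T|`.

If `T` meets `G₀`, then `H[T]` is connected through its trace on `G₀`. To split `T` into parts of
prescribed sizes, split `S` into RP parts `S_j`, split each trace of `T` into RP pieces whose sizes
are those of the traces of the `S_j` (empty pieces allowed), and let `T_j` collect the `j`-th
pieces: it is matched to `S_j`. If `T` misses `G₀`, so does `S`, which, being connected, lies in a
single `Kᵢ`; then `T` lies in `Gᵢ`, where it is RP.
-/

open Finset

/-- `G.IsRP A` : the subgraph of `G` induced by the vertex set `A` is recursively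
partitionable (RP): either `|A| = 1`, or `G[A]` is connected and for every integer partition
`a₁, …, a_k` (with `k ≥ 2`) of `|A|` there is a partition of `A` into parts of exactly these
sizes, each of which again induces an RP subgraph.  (The guard `B.card < A.card` is
automatically satisfied by every part of such a partition; it is only needed for
well-foundedness of the recursion.) -/
def SimpleGraph.IsRP {V : Type} [DecidableEq V] (G : SimpleGraph V) (A : Finset V) : Prop :=
  A.card = 1 ∨ ((G.induce (A : Set V)).Connected ∧
    ∀ l : List ℕ, (∀ a ∈ l, 0 < a) → 2 ≤ l.length → l.sum = A.card →
      ∃ P : List (Finset V), P.map Finset.card = l ∧ P.Pairwise _root_.Disjoint ∧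
        P.foldr (· ∪ ·) ∅ = A ∧ ∀ B ∈ P, ∀ _ : B.card < A.card, G.IsRP B)
termination_by A.card

/-- The join `G₀ + (G₁ ∪ ⋯ ∪ G_k)` of a graph `G₀` with the disjoint union of the graphs
`G i`, `i : Fin k`: every vertex of `G₀` is joined to every other vertex. -/
def SimpleGraph.repJoin {V₀ : Type} {k : ℕ} {V : Fin k → Type}
    (G₀ : SimpleGraph V₀) (G : ∀ i, SimpleGraph (V i)) :
    SimpleGraph (V₀ ⊕ Σ i, V i) where
  Adj a b :=
    match a, b with
    | Sum.inl x, Sum.inl y => G₀.Adj x y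
    | Sum.inl _, Sum.inr _ => True
    | Sum.inr _, Sum.inl _ => True
    | Sum.inr x, Sum.inr y => ∃ h : x.1 = y.1, (G y.1).Adj (h ▸ x.2) y.2
  symm := by
    constructor
    rintro (x | ⟨i, x⟩) (y | ⟨j, y⟩) h
    · exact h.symm
    · trivial
    · trivial
    · obtain ⟨h, hadj⟩ := h
      dsimp only at h
      subst h
      exact ⟨rfl, (G i).adj_symm hadj⟩
  loopless := by
    constructor
    rintro (x | ⟨i, x⟩) h
    · exact G₀.ne_of_adj h rfl
    · obtain ⟨h', hadj⟩ := h
      exact (G i).ne_of_adj hadj rfl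

/-- The semistar `K_{b₀}(c₁, …, c_k)`: the join of the clique `K_{b₀}` with the disjoint
union of the cliques `K_{c i}`, `i : Fin k`. -/
def SimpleGraph.semistar (b₀ : ℕ) {k : ℕ} (c : Fin k → ℕ) :
    SimpleGraph (Fin b₀ ⊕ Σ i, Fin (c i)) :=
  SimpleGraph.repJoin (⊤ : SimpleGraph (Fin b₀)) (fun i => (⊤ : SimpleGraph (Fin (c i))))

namespace List

theorem sum_filter_pos (m : List ℕ) : (m.filter (0 < ·)).sum = m.sum := by
  induction m with
  | nil => rfl
  | cons a m ih => rcases a with _ | a <;> simp [ih]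

theorem lt_sum_of_mem {l : List ℕ} {a : ℕ} (hpos : ∀ x ∈ l, 0 < x) (hlen : 2 ≤ l.length)
    (ha : a ∈ l) : a < l.sum := by
  have hne : l.erase a ≠ [] := by
    rw [← length_pos_iff, length_erase_of_mem ha]
    omega
  have := sum_pos _ (fun x hx => hpos x (mem_of_mem_erase hx)) hne
  rw [← sum_erase ha]
  omega

end List

namespace Finset

section

variable {α : Type*} [DecidableEq α]

theorem mem_foldr_union {L : List (Finset α)} {x : α} :
    x ∈ L.foldr (· ∪ ·) ∅ ↔ ∃ B ∈ L, x ∈ B := by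
  induction L with
  | nil => simp
  | cons B L ih => simp [ih]

theorem foldr_union_map_map {β : Type*} [DecidableEq β] (e : α ↪ β) (L : List (Finset α)) :
    (L.map (·.map e)).foldr (· ∪ ·) ∅ = (L.foldr (· ∪ ·) ∅).map e := by
  induction L with
  | nil => simp
  | cons B L ih => simp [ih, map_union]

theorem sum_map_card_preimage {β : Type*} {f : β → α} (hf : Function.Injective f)
    {L : List (Finset α)} (h : L.Pairwise Disjoint) :
    (L.map fun B => #(B.preimage f hf.injOn)).sum = #((L.foldr (· ∪ ·) ∅).preimage f hf.injOn) := by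
  classical
  induction L with
  | nil => simp
  | cons B L ih =>
    rw [List.pairwise_cons] at h
    have hB : Disjoint B (L.foldr (· ∪ ·) ∅) := disjoint_left.2 fun x hxB hx => by
      obtain ⟨C, hC, hxC⟩ := mem_foldr_union.1 hx
      exact disjoint_left.1 (h.1 C hC) hxB hxC
    rw [List.map_cons, List.sum_cons, ih h.2, List.foldr_cons, preimage_union]
    exact (card_union_of_disjoint (disjoint_preimage hB)).symm

theorem exists_pad_with_empty : ∀ (m : List ℕ) (Q' : List (Finset α)),
    Q'.map card = m.filter (0 < ·) → Q'.Pairwise Disjoint →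
    ∃ Q : List (Finset α), Q.map card = m ∧ Q.Pairwise Disjoint ∧
      Q.foldr (· ∪ ·) ∅ = Q'.foldr (· ∪ ·) ∅ ∧ ∀ B ∈ Q, B.Nonempty → B ∈ Q'
  | [], Q', hc, _ => by
    obtain rfl : Q' = [] := by simpa using hc
    exact ⟨[], by simp⟩
  | 0 :: m, Q', hc, hd => by
    obtain ⟨Q, hQc, hQd, hQu, hQ⟩ := exists_pad_with_empty m Q' (by simpa using hc) hd
    refine ⟨∅ :: Q, by simp [hQc], List.pairwise_cons.2 ⟨fun _ _ => disjoint_bot_left, hQd⟩,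
      by simp [hQu], ?_⟩
    simpa using hQ
  | (a + 1) :: m, Q', hc, hd => by
    obtain ⟨B, Q'', rfl, hB, hc⟩ := List.map_eq_cons_iff.1 (by simpa using hc)
    rw [List.pairwise_cons] at hd
    obtain ⟨Q, hQc, hQd, hQu, hQ⟩ := exists_pad_with_empty m Q'' hc hd.2
    refine ⟨B :: Q, by simp [hB, hQc], List.pairwise_cons.2 ⟨fun C hC => ?_, hQd⟩,
      by simp [hQu], ?_⟩
    · rcases C.eq_empty_or_nonempty with rfl | hne
      · exact disjoint_bot_right
      · exact hd.1 C (hQ C hC hne)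
    · intro C hC hne
      rcases List.mem_cons.1 hC with rfl | hC
      · exact List.mem_cons_self
      · exact List.mem_cons_of_mem _ (hQ C hC hne)

end

variable {α ι : Type*} {β : ι → Type*}

noncomputable def toRightAt (u : Finset (α ⊕ Σ i, β i)) (i : ι) : Finset (β i) :=
  u.preimage _ ((Function.Embedding.sigmaMk i).trans .inr).injective.injOn

@[simp] theorem mem_toRightAt {u : Finset (α ⊕ Σ i, β i)} {i : ι} {y : β i} :
    y ∈ u.toRightAt i ↔ Sum.inr ⟨i, y⟩ ∈ u :=
  mem_preimage

theorem disjoint_of_toLeft_of_toRightAt {u v : Finset (α ⊕ Σ i, β i)}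
    (h₀ : Disjoint u.toLeft v.toLeft) (h : ∀ i, Disjoint (u.toRightAt i) (v.toRightAt i)) :
    Disjoint u v := by
  rw [disjoint_left]
  rintro (a | ⟨i, y⟩) hu hv
  · exact disjoint_left.1 h₀ (mem_toLeft.2 hu) (mem_toLeft.2 hv)
  · exact disjoint_left.1 (h i) (mem_toRightAt.2 hu) (mem_toRightAt.2 hv)

theorem eq_map_toRightAt_of_toLeft_eq_empty {u : Finset (α ⊕ Σ i, β i)} {i : ι}
    (h₀ : u.toLeft = ∅) (h : ∀ j ≠ i, u.toRightAt j = ∅) :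
    u = (u.toRightAt i).map ((Function.Embedding.sigmaMk i).trans .inr) := by
  ext (a | ⟨j, y⟩)
  · simpa using (eq_empty_iff_forall_notMem.1 h₀ a)
  · rcases eq_or_ne j i with rfl | hj
    · simp
    · simpa [hj.symm] using (eq_empty_iff_forall_notMem.1 (h j hj) y)

section

variable [Fintype ι]

@[simp] theorem toRightAt_univ [Fintype α] [∀ i, Fintype (β i)] (i : ι) :
    (univ : Finset (α ⊕ Σ i, β i)).toRightAt i = univ := by
  ext; simp

@[simp] theorem toRightAt_disjSum_sigma (s : Finset α) (t : ∀ i, Finset (β i)) (i : ι) :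
    (s.disjSum (univ.sigma t)).toRightAt i = t i := by
  ext; simp

theorem disjSum_sigma_toRightAt (u : Finset (α ⊕ Σ i, β i)) :
    u.toLeft.disjSum (univ.sigma u.toRightAt) = u := by
  ext (a | ⟨i, y⟩) <;> simp

theorem card_eq_card_toLeft_add_sum_card_toRightAt (u : Finset (α ⊕ Σ i, β i)) :
    #u = #u.toLeft + ∑ i, #(u.toRightAt i) := by
  conv_lhs => rw [← disjSum_sigma_toRightAt u]
  rw [card_disjSum, card_sigma]

end

variable [DecidableEq α] [DecidableEq ι] [∀ i, DecidableEq (β i)]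

theorem sum_map_card_toLeft {P : List (Finset (α ⊕ Σ i, β i))} (h : P.Pairwise Disjoint) :
    (P.map fun C => #C.toLeft).sum = #(P.foldr (· ∪ ·) ∅).toLeft := by
  simpa only [preimage_inl] using sum_map_card_preimage Sum.inl_injective h

theorem sum_map_card_toRightAt {P : List (Finset (α ⊕ Σ i, β i))} (h : P.Pairwise Disjoint)
    (i : ι) : (P.map fun C => #(C.toRightAt i)).sum = #((P.foldr (· ∪ ·) ∅).toRightAt i) :=
  sum_map_card_preimage ((Function.Embedding.sigmaMk i).trans .inr).injective h

variable [Fintype ι]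

theorem exists_partition_of_fiber_partitions {γ : Type*} {δ : ι → Type*} :
    ∀ (Ps : List (Finset (γ ⊕ Σ i, δ i))) (Q₀ : List (Finset α)) (Q : ∀ i, List (Finset (β i))),
    Q₀.map card = Ps.map (fun C => #C.toLeft) →
    (∀ i, (Q i).map card = Ps.map (fun C => #(C.toRightAt i))) →
    Q₀.Pairwise Disjoint → (∀ i, (Q i).Pairwise Disjoint) →
    ∃ T : List (Finset (α ⊕ Σ i, β i)), T.map card = Ps.map card ∧ T.Pairwise Disjoint ∧
      T.foldr (· ∪ ·) ∅ =
        (Q₀.foldr (· ∪ ·) ∅).disjSum (univ.sigma fun i => (Q i).foldr (· ∪ ·) ∅) ∧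
      ∀ B ∈ T, B.toLeft ∈ Q₀ ∧ (∀ i, B.toRightAt i ∈ Q i) ∧
        ∃ C ∈ Ps, #B.toLeft = #C.toLeft ∧ ∀ i, #(B.toRightAt i) = #(C.toRightAt i)
  | [], Q₀, Q, h₀, h, _, _ => by
    obtain rfl : Q₀ = [] := by simpa using h₀
    obtain rfl : Q = fun _ => [] := funext fun i => by simpa using h i
    exact ⟨[], by simp⟩
  | C :: Ps, Q₀, Q, h₀, h, hd₀, hd => by
    obtain ⟨B₀, Q₀, rfl, hB₀, h₀⟩ := List.map_eq_cons_iff.1 h₀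
    choose B Q' hQ hB hQ' using fun i => List.map_eq_cons_iff.1 (h i)
    obtain rfl : Q = fun i => B i :: Q' i := funext hQ
    rw [List.pairwise_cons] at hd₀
    simp only [List.pairwise_cons] at hd
    obtain ⟨T, hTc, hTd, hTu, hT⟩ :=
      exists_partition_of_fiber_partitions Ps Q₀ Q' h₀ hQ' hd₀.2 fun i => (hd i).2
    refine ⟨B₀.disjSum (univ.sigma B) :: T, ?_, List.pairwise_cons.2 ⟨fun D hD => ?_, hTd⟩, ?_, ?_⟩
    · simp [hTc, card_eq_card_toLeft_add_sum_card_toRightAt C, hB₀, hB]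
    · exact disjoint_of_toLeft_of_toRightAt (by simpa using hd₀.1 _ (hT D hD).1)
        fun i => by simpa using (hd i).1 _ ((hT D hD).2.1 i)
    · ext (a | ⟨i, y⟩) <;> simp [hTu]
    · intro D hD
      rcases List.mem_cons.1 hD with rfl | hD
      · exact ⟨by simp, fun i => by simp, C, List.mem_cons_self, by simpa using hB₀,
          fun i => by simpa using hB i⟩
      · obtain ⟨hD₀, hDi, C', hC', hC'₀, hC'i⟩ := hT D hD
        exact ⟨List.mem_cons_of_mem _ hD₀, fun i => List.mem_cons_of_mem _ (hDi i),
          C', List.mem_cons_of_mem _ hC', hC'₀, hC'i⟩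

end Finset

namespace SimpleGraph

theorem Reachable.eq_of_forall_adj {V α : Type*} {G : SimpleGraph V} {f : V → α}
    (hf : ∀ u v, G.Adj u v → f u = f v) {u v : V} (h : G.Reachable u v) : f u = f v := by
  obtain ⟨p⟩ := h
  induction p with
  | nil => rfl
  | cons hadj _ ih => exact (hf _ _ hadj).trans ih

variable {V W : Type} [DecidableEq V] [DecidableEq W] {G : SimpleGraph V}

theorem IsRP.connected {A : Finset V} (h : G.IsRP A) : (G.induce (A : Set V)).Connected := by
  rw [IsRP] at h
  rcases h with h | ⟨hc, -⟩
  · obtain ⟨a, rfl⟩ := card_eq_one.1 h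
    have : Unique ((({a} : Finset V) : Set V)) := by rw [coe_singleton]; infer_instance
    exact Connected.of_subsingleton
  · exact hc

theorem IsRP.nonempty {A : Finset V} (h : G.IsRP A) : A.Nonempty := by
  obtain ⟨⟨a, ha⟩⟩ := h.connected.nonempty
  exact ⟨a, ha⟩

theorem IsRP.exists_partition {A : Finset V} (hA : G.IsRP A) {l : List ℕ}
    (hpos : ∀ a ∈ l, 0 < a) (hsum : l.sum = #A) :
    ∃ P : List (Finset V), P.map card = l ∧ P.Pairwise Disjoint ∧ P.foldr (· ∪ ·) ∅ = A ∧
      ∀ B ∈ P, G.IsRP B := by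
  match l, hpos, hsum with
  | [], _, hsum => exact absurd hsum (by simpa using hA.nonempty.card_pos.ne)
  | [a], _, hsum => exact ⟨[A], by simpa using hsum.symm, by simp, by simp, by simpa using hA⟩
  | a :: b :: l, hpos, hsum =>
    rw [IsRP] at hA
    rcases hA with h1 | ⟨-, hpart⟩
    · have := hpos a (by simp)
      have := hpos b (by simp)
      simp only [List.sum_cons] at hsum
      omega
    obtain ⟨P, hPc, hPd, hPu, hPrp⟩ := hpart _ hpos (by simp) hsum
    refine ⟨P, hPc, hPd, hPu, fun B hB => hPrp B hB ?_⟩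
    rw [← hsum]
    exact List.lt_sum_of_mem hpos (by simp) (hPc ▸ List.mem_map_of_mem hB)

theorem exists_partition_with_empty_parts {A : Finset V} (hA : A.Nonempty → G.IsRP A) {m : List ℕ}
    (hsum : m.sum = #A) :
    ∃ Q : List (Finset V), Q.map card = m ∧ Q.Pairwise Disjoint ∧ Q.foldr (· ∪ ·) ∅ = A ∧
      ∀ B ∈ Q, B.Nonempty → G.IsRP B := by
  obtain ⟨Q', hQ'c, hQ'd, hQ'u, hQ'⟩ : ∃ Q' : List (Finset V), Q'.map card = m.filter (0 < ·) ∧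
      Q'.Pairwise Disjoint ∧ Q'.foldr (· ∪ ·) ∅ = A ∧ ∀ B ∈ Q', G.IsRP B := by
    rcases A.eq_empty_or_nonempty with rfl | hne
    · refine ⟨[], ?_, by simp, by simp, by simp⟩
      refine (List.filter_eq_nil_iff.2 fun a ha => ?_).symm
      simp [List.sum_eq_zero_iff.1 (by simpa using hsum) a ha]
    · exact (hA hne).exists_partition (by simp) ((List.sum_filter_pos m).trans hsum)
  obtain ⟨Q, hQc, hQd, hQu, hQ⟩ := exists_pad_with_empty m Q' hQ'c hQ'd
  exact ⟨Q, hQc, hQd, hQu.trans hQ'u, fun B hB hne => hQ' B (hQ B hB hne)⟩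

theorem IsRP.map {G' : SimpleGraph W} {A : Finset V} (f : G →g G') (hf : Function.Injective f)
    (hA : G.IsRP A) : G'.IsRP (A.map ⟨f, hf⟩) := by
  rw [IsRP] at hA ⊢
  refine hA.imp (fun h => by rwa [card_map]) fun ⟨hc, hpart⟩ => ⟨?_, fun l hpos hlen hsum => ?_⟩
  · refine hc.map (induceHom f fun a ha => mem_map_of_mem (⟨f, hf⟩ : V ↪ W) ha) ?_
    rintro ⟨_, hb⟩
    obtain ⟨a, ha, rfl⟩ := Finset.mem_map.1 hb
    exact ⟨⟨a, ha⟩, rfl⟩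
  · obtain ⟨P, hPc, hPd, hPu, hPrp⟩ := hpart l hpos hlen (by rwa [card_map] at hsum)
    refine ⟨P.map (·.map ⟨f, hf⟩), by simpa [Function.comp_def] using hPc,
      List.pairwise_map.2 (hPd.imp (disjoint_map _).2), by rw [foldr_union_map_map, hPu], ?_⟩
    simp only [List.mem_map]
    rintro _ ⟨B, hB, rfl⟩ hlt
    exact (hPrp B hB (by simpa using hlt)).map f hf
termination_by #A
decreasing_by simpa using hlt

section repJoin

variable {V₀ W₀ : Type} {k : ℕ} {V W : Fin k → Type} (G₀ : SimpleGraph V₀)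
  (G : ∀ i, SimpleGraph (V i))

def repJoinInl : G₀ →g G₀.repJoin G where
  toFun := Sum.inl
  map_rel' h := h

def repJoinInr (i : Fin k) : G i →g G₀.repJoin G where
  toFun y := Sum.inr ⟨i, y⟩
  map_rel' h := ⟨rfl, h⟩

theorem repJoinInr_injective (i : Fin k) : Function.Injective (repJoinInr G₀ G i) :=
  ((Function.Embedding.sigmaMk i).trans .inr).injective

theorem connected_induce_repJoin {T : Finset (V₀ ⊕ Σ i, V i)}
    (h : (G₀.induce (T.toLeft : Set V₀)).Connected) :
    ((G₀.repJoin G).induce (T : Set (V₀ ⊕ Σ i, V i))).Connected := by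
  obtain ⟨⟨a₀, ha₀⟩⟩ := h.nonempty
  rw [connected_iff_exists_forall_reachable]
  refine ⟨⟨Sum.inl a₀, mem_toLeft.1 ha₀⟩, ?_⟩
  rintro ⟨a | z, hx⟩
  · exact (h.preconnected ⟨a₀, ha₀⟩ ⟨a, mem_toLeft.2 hx⟩).map
      (induceHom (repJoinInl G₀ G) fun a ha => mem_toLeft.1 ha)
  · exact Adj.reachable trivial

theorem exists_toRightAt_eq_empty_of_toLeft_eq_empty {T : Finset (V₀ ⊕ Σ i, V i)}
    (hc : ((G₀.repJoin G).induce (T : Set (V₀ ⊕ Σ i, V i))).Connected) (h₀ : T.toLeft = ∅) :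
    ∃ i, ∀ j ≠ i, T.toRightAt j = ∅ := by
  have hinr : ∀ x ∈ T, ∃ z, x = Sum.inr z := by
    rintro (a | z) hx
    · simpa [h₀] using mem_toLeft.2 hx
    · exact ⟨z, rfl⟩
  let index (x : (T : Set (V₀ ⊕ Σ i, V i))) : Option (Fin k) := x.1.elim (fun _ => none) (some ·.1)
  have hindex : ∀ x y, ((G₀.repJoin G).induce _).Adj x y → index x = index y := by
    rintro ⟨x, hx⟩ ⟨y, hy⟩ hadj
    obtain ⟨z, rfl⟩ := hinr x hx
    obtain ⟨w, rfl⟩ := hinr y hy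
    exact congrArg some hadj.1
  obtain ⟨x₀⟩ := hc.nonempty
  obtain ⟨⟨i, y₀⟩, hx₀⟩ := hinr x₀.1 x₀.2
  refine ⟨i, fun j hj => eq_empty_iff_forall_notMem.2 fun y hy => hj ?_⟩
  have := (hc.preconnected ⟨_, mem_toRightAt.1 hy⟩ x₀).eq_of_forall_adj hindex
  simpa [index, hx₀] using this

variable [DecidableEq V₀] [DecidableEq W₀] [∀ i, DecidableEq (V i)] [∀ i, DecidableEq (W i)]

theorem isRP_repJoin_of_toLeft_eq_empty {K₀ : SimpleGraph W₀} {K : ∀ i, SimpleGraph (W i)}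
    {S : Finset (W₀ ⊕ Σ i, W i)} {T : Finset (V₀ ⊕ Σ i, V i)} (hS : (K₀.repJoin K).IsRP S)
    (hS₀ : S.toLeft = ∅) (hT₀ : T.toLeft = ∅) (hc : ∀ i, #(T.toRightAt i) = #(S.toRightAt i))
    (hT : ∀ i, (T.toRightAt i).Nonempty → (G i).IsRP (T.toRightAt i)) :
    (G₀.repJoin G).IsRP T := by
  obtain ⟨i, hi⟩ := exists_toRightAt_eq_empty_of_toLeft_eq_empty K₀ K hS.connected hS₀
  have hTi : ∀ j ≠ i, T.toRightAt j = ∅ := fun j hj => by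
    rw [← card_eq_zero, hc j, hi j hj, card_empty]
  have hne : (T.toRightAt i).Nonempty := by
    have := hS.nonempty
    rw [eq_map_toRightAt_of_toLeft_eq_empty hS₀ hi] at this
    rw [← card_pos, hc i, card_pos]
    exact map_nonempty.1 this
  rw [eq_map_toRightAt_of_toLeft_eq_empty hT₀ hTi]
  exact (hT i hne).map (repJoinInr G₀ G i) (repJoinInr_injective G₀ G i)

theorem IsRP.repJoin_of_card_eq {K₀ : SimpleGraph W₀} {K : ∀ i, SimpleGraph (W i)}
    {S : Finset (W₀ ⊕ Σ i, W i)} {T : Finset (V₀ ⊕ Σ i, V i)} (hS : (K₀.repJoin K).IsRP S)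
    (hc₀ : #T.toLeft = #S.toLeft) (hc : ∀ i, #(T.toRightAt i) = #(S.toRightAt i))
    (hT₀ : T.toLeft.Nonempty → G₀.IsRP T.toLeft)
    (hT : ∀ i, (T.toRightAt i).Nonempty → (G i).IsRP (T.toRightAt i)) :
    (G₀.repJoin G).IsRP T := by
  rcases T.toLeft.eq_empty_or_nonempty with h₀ | h₀
  · have hS₀ : S.toLeft = ∅ := by rw [← card_eq_zero, ← hc₀, h₀, card_empty]
    exact isRP_repJoin_of_toLeft_eq_empty G₀ G hS hS₀ h₀ hc hT
  rw [IsRP]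
  refine .inr ⟨connected_induce_repJoin G₀ G (hT₀ h₀).connected, fun l hpos _ hsum => ?_⟩
  have hcard : #T = #S := by
    simp [card_eq_card_toLeft_add_sum_card_toRightAt T,
      card_eq_card_toLeft_add_sum_card_toRightAt S, hc₀, hc]
  obtain ⟨Ps, hPc, hPd, hPu, hPrp⟩ := hS.exists_partition hpos (hsum.trans hcard)
  obtain ⟨Q₀, hQ₀c, hQ₀d, hQ₀u, hQ₀⟩ := exists_partition_with_empty_parts hT₀
    (m := Ps.map fun C => #C.toLeft) (by rw [hc₀, ← hPu, sum_map_card_toLeft hPd])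
  choose Q hQc hQd hQu hQ using fun i => exists_partition_with_empty_parts (hT i)
    (m := Ps.map fun C => #(C.toRightAt i)) (by rw [hc i, ← hPu, sum_map_card_toRightAt hPd])
  obtain ⟨Tp, hTc, hTd, hTu, hTp⟩ := exists_partition_of_fiber_partitions Ps Q₀ Q hQ₀c hQc hQ₀d hQd
  refine ⟨Tp, hTc.trans hPc, hTd, ?_, fun B hB hlt => ?_⟩
  · rw [hTu, hQ₀u, funext hQu, disjSum_sigma_toRightAt]
  obtain ⟨hB₀, hBi, C, hC, hC₀, hCi⟩ := hTp B hB
  exact (hPrp C hC).repJoin_of_card_eq hC₀ hCi (hQ₀ _ hB₀) fun i => hQ i _ (hBi i)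
termination_by #T

end repJoin

end SimpleGraph

/-- The RP replacement theorem: if the semistar `K_{b₀}(b₁, …, b_k)` is recursively
partitionable and `G₀, G₁, …, G_k` are recursively partitionable graphs with `n(Gᵢ) = bᵢ`,
then the replacement graph `H = G₀ + (G₁ ∪ ⋯ ∪ G_k)` is recursively partitionable. -/
theorem repJoin_isRP {V₀ : Type} [Fintype V₀] [DecidableEq V₀] {k : ℕ}
    {V : Fin k → Type} [∀ i, Fintype (V i)] [∀ i, DecidableEq (V i)]
    (b₀ : ℕ) (b : Fin k → ℕ)
    (hsemi : (SimpleGraph.semistar b₀ b).IsRP Finset.univ)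
    (G₀ : SimpleGraph V₀) (G : ∀ i, SimpleGraph (V i))
    (hcard₀ : Fintype.card V₀ = b₀) (hcard : ∀ i, Fintype.card (V i) = b i)
    (hG₀ : G₀.IsRP Finset.univ) (hG : ∀ i, (G i).IsRP Finset.univ) :
    (G₀.repJoin G).IsRP Finset.univ :=
  hsemi.repJoin_of_card_eq G₀ G (by simp [hcard₀]) (fun i => by simp [hcard i])
    (fun _ => by simpa using hG₀) fun i _ => by simpa using hG i
end

section
/- Every recursively partitionable graph is 1/3-tough: for every vertex subset S of an RP graph G with c(G−S) ≥ 2, one has |S| ≥ c(G−S)/3. -/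
open Finset

/-!
By induction on `|A|`: if `A` is RP and meets `S`, then `G[A] - S` has at most `3 |A ∩ S|`
components. Suppose it has more than three and let `M` be the largest order of a component.
If every order `1, …, R` with `R = |A| - M - 1` occurred, the component orders would include
`1, …, R` and `M` and sum to at most `|A| - 1 = M + R`; Gauss' formula then leaves room for at most
three components. So some `k ≤ |A| - M - 1` is the order of no component; split `A` into RP parts
`B`, `C` with `|B| = k`. The connected part `C` has more than `M` vertices, so it meets `S`.
If `B` meets `S` too, the components of `G[A] - S` are covered by those of `G[B] - S` and
`G[C] - S`. Otherwise the connected set `B` lies in a component of order `≠ k`, hence strictly,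
and every component of `G[A] - S` meets `C - S`. Either way induction applies.
-/

theorem sum_add_card_le_of_subset_range {ι : Type*} [Fintype ι] {f : ι → ℕ}
    (hf : ∀ i, 0 < f i) {E : Finset ℕ} (hE : ↑E ⊆ Set.range f) :
    ∑ d ∈ E, d + Fintype.card ι ≤ ∑ i, f i + #E := by
  classical
  choose g hg using fun d (hd : d ∈ E) => hE hd
  set T := E.attach.image fun d => g d.1 d.2
  have hinj : Set.InjOn (fun d : E => g d.1 d.2) (E.attach : Set E) := fun d _ e _ h =>
    Subtype.ext ((hg d.1 d.2).symm.trans ((congrArg f h).trans (hg e.1 e.2)))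
  have hT : ∑ i ∈ T, f i = ∑ d ∈ E, d := by
    rw [sum_image hinj, ← sum_attach E]
    exact sum_congr rfl fun d _ => hg d.1 d.2
  have hTcard : #T = #E := by rw [card_image_of_injOn hinj, card_attach]
  have hrest : #(univ \ T) ≤ ∑ i ∈ univ \ T, f i :=
    (card_eq_sum_ones _).trans_le (sum_le_sum fun i _ => hf i)
  have := sum_sdiff (f := f) (subset_univ T)
  have := card_sdiff_add_card_eq_card (subset_univ T)
  rw [card_univ] at this
  omega

theorem sum_Icc_id_mul_two (n : ℕ) : (∑ k ∈ Icc 1 n, k) * 2 = n * (n + 1) := by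
  induction n with
  | zero => rfl
  | succ n ih => rw [sum_Icc_succ_top (by omega), add_mul, ih]; ring

theorem card_le_three_of_Icc_subset_range {ι : Type*} [Fintype ι] {f : ι → ℕ}
    (hf : ∀ i, 0 < f i) (i₀ : ι) {R : ℕ} (hR : ↑(Icc 1 R) ⊆ Set.range f)
    (hsum : ∑ i, f i ≤ f i₀ + R) :
    Fintype.card ι ≤ 3 := by
  have gauss := sum_Icc_id_mul_two R
  by_cases hM : f i₀ ≤ R
  · have := sum_add_card_le_of_subset_range hf hR
    rw [Nat.card_Icc, Nat.add_sub_cancel] at this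
    rcases le_or_gt R 2 with h | h <;> nlinarith
  · have hnot : f i₀ ∉ Icc 1 R := fun h => hM (mem_Icc.1 h).2
    have hE : ↑(insert (f i₀) (Icc 1 R)) ⊆ Set.range f := by
      rw [coe_insert]
      exact Set.insert_subset ⟨i₀, rfl⟩ hR
    have := sum_add_card_le_of_subset_range hf hE
    rw [sum_insert hnot, card_insert_of_notMem hnot, Nat.card_Icc, Nat.add_sub_cancel] at this
    rcases le_or_gt R 1 with h | h <;> nlinarith

namespace SimpleGraph

section Components

variable {V : Type*} (G : SimpleGraph V)

noncomputable def numComponentsOn (W : Finset V) : ℕ :=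
  Nat.card (G.induce (W : Set V)).ConnectedComponent

open Classical in
noncomputable def componentFinset {W : Finset V}
    (K : (G.induce (W : Set V)).ConnectedComponent) : Finset V :=
  (W.attach.filter fun v => (G.induce (W : Set V)).connectedComponentMk v = K).map
    (Function.Embedding.subtype _)

variable {G}

theorem mem_componentFinset {W : Finset V} {K : (G.induce (W : Set V)).ConnectedComponent}
    {v : V} :
    v ∈ G.componentFinset K ↔
      ∃ h : v ∈ W, (G.induce (W : Set V)).connectedComponentMk ⟨v, h⟩ = K := by
  simp [componentFinset]

theorem componentFinset_subset {W : Finset V} (K : (G.induce (W : Set V)).ConnectedComponent) :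
    G.componentFinset K ⊆ W := fun _ hv => (mem_componentFinset.1 hv).1

theorem componentFinset_nonempty {W : Finset V}
    (K : (G.induce (W : Set V)).ConnectedComponent) : (G.componentFinset K).Nonempty := by
  obtain ⟨⟨v, hv⟩, rfl⟩ := K.exists_rep
  exact ⟨v, mem_componentFinset.2 ⟨hv, rfl⟩⟩

theorem sum_card_componentFinset (W : Finset V)
    [Fintype (G.induce (W : Set V)).ConnectedComponent] :
    ∑ K : (G.induce (W : Set V)).ConnectedComponent, #(G.componentFinset K) = #W := by
  classical
  simp only [componentFinset, card_map]
  rw [← card_attach (s := W), card_eq_sum_card_fiberwise (t := univ)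
    (f := (G.induce (W : Set V)).connectedComponentMk) fun _ _ => mem_univ _]

theorem subset_componentFinset_of_preconnected {B W : Finset V} (hBW : B ⊆ W)
    (hB : (G.induce (B : Set V)).Preconnected) {b : V} (hb : b ∈ B) :
    B ⊆ G.componentFinset ((G.induce (W : Set V)).connectedComponentMk ⟨b, hBW hb⟩) := by
  intro v hv
  refine mem_componentFinset.2 ⟨hBW hv, ConnectedComponent.sound ?_⟩
  exact (hB ⟨v, hv⟩ ⟨b, hb⟩).map (induceHomOfLE G (coe_subset.2 hBW)).toHom

theorem card_le_of_preconnected_subset {B W : Finset V} (hBW : B ⊆ W)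
    (hB : (G.induce (B : Set V)).Preconnected) {M : ℕ}
    (hM : ∀ K : (G.induce (W : Set V)).ConnectedComponent, #(G.componentFinset K) ≤ M) :
    #B ≤ M := by
  obtain rfl | ⟨b, hb⟩ := B.eq_empty_or_nonempty
  · exact Nat.zero_le M
  · exact (card_le_card (subset_componentFinset_of_preconnected hBW hB hb)).trans (hM _)

variable [Finite V]

theorem numComponentsOn_le_one {W : Finset V} (h : (G.induce (W : Set V)).Preconnected) :
    G.numComponentsOn W ≤ 1 :=
  Finite.card_le_one_iff_subsingleton.2 h.subsingleton_connectedComponent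

theorem numComponentsOn_le_of_forall_exists_mem {X W : Finset V} (hXW : X ⊆ W)
    (h : ∀ K : (G.induce (W : Set V)).ConnectedComponent, ∃ v ∈ X, v ∈ G.componentFinset K) :
    G.numComponentsOn W ≤ G.numComponentsOn X := by
  refine Nat.card_le_card_of_surjective
    (ConnectedComponent.map (induceHomOfLE G (coe_subset.2 hXW)).toHom) fun K => ?_
  obtain ⟨v, hvX, hv⟩ := h K
  obtain ⟨-, rfl⟩ := mem_componentFinset.1 hv
  exact ⟨(G.induce (X : Set V)).connectedComponentMk ⟨v, hvX⟩, rfl⟩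

theorem numComponentsOn_union_le [DecidableEq V] (X Y : Finset V) :
    G.numComponentsOn (X ∪ Y) ≤ G.numComponentsOn X + G.numComponentsOn Y := by
  rw [numComponentsOn, numComponentsOn, numComponentsOn, ← Nat.card_sum]
  refine Nat.card_le_card_of_surjective
    (Sum.elim (ConnectedComponent.map (induceHomOfLE G (coe_subset.2 subset_union_left)).toHom)
      (ConnectedComponent.map (induceHomOfLE G (coe_subset.2 subset_union_right)).toHom)) ?_
  rintro K
  obtain ⟨⟨v, hv⟩, rfl⟩ := K.exists_rep
  rcases mem_union.1 hv with h | h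
  exacts [⟨Sum.inl (connectedComponentMk _ ⟨v, h⟩), rfl⟩,
    ⟨Sum.inr (connectedComponentMk _ ⟨v, h⟩), rfl⟩]

theorem numComponentsOn_union_le_of_preconnected [DecidableEq V] {B Y : Finset V}
    (hB : (G.induce (B : Set V)).Preconnected)
    (hK : ∀ K : (G.induce ((B ∪ Y : Finset V) : Set V)).ConnectedComponent,
      G.componentFinset K ≠ B) :
    G.numComponentsOn (B ∪ Y) ≤ G.numComponentsOn Y := by
  refine numComponentsOn_le_of_forall_exists_mem subset_union_right fun K => ?_
  by_contra! hKY
  have hKB : G.componentFinset K ⊆ B := fun v hv =>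
    (mem_union.1 (componentFinset_subset K hv)).resolve_right fun hvY => hKY v hvY hv
  obtain ⟨b, hb⟩ := componentFinset_nonempty K
  have hBK := subset_componentFinset_of_preconnected (W := B ∪ Y) subset_union_left hB (hKB hb)
  rw [(mem_componentFinset.1 hb).2] at hBK
  exact hK K (subset_antisymm hKB hBK)

theorem exists_card_componentFinset_ne {W : Finset V} {n : ℕ} (hWn : #W < n)
    (hW : 3 < G.numComponentsOn W) :
    ∃ M k, (∀ K : (G.induce (W : Set V)).ConnectedComponent, #(G.componentFinset K) ≤ M) ∧
      0 < k ∧ k + M < n ∧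
      ∀ K : (G.induce (W : Set V)).ConnectedComponent, #(G.componentFinset K) ≠ k := by
  classical
  have : Fintype (G.induce (W : Set V)).ConnectedComponent := Fintype.ofFinite _
  rw [numComponentsOn, Nat.card_eq_fintype_card] at hW
  have : Nonempty (G.induce (W : Set V)).ConnectedComponent := Fintype.card_pos_iff.1 (by omega)
  obtain ⟨K₀, -, hK₀⟩ := exists_max_image univ
    (fun K : (G.induce (W : Set V)).ConnectedComponent => #(G.componentFinset K)) univ_nonempty
  have hK₀W : #(G.componentFinset K₀) ≤ #W := card_le_card (componentFinset_subset K₀)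
  by_contra! h
  refine hW.not_ge (card_le_three_of_Icc_subset_range
    (fun K => (componentFinset_nonempty K).card_pos) K₀ (R := n - #(G.componentFinset K₀) - 1)
    (fun k hk => ?_) ?_)
  · have hk := mem_Icc.1 hk
    exact h _ k (fun K => hK₀ K (mem_univ K)) hk.1 (by omega)
  · rw [sum_card_componentFinset]
    omega

end Components

section RecursivelyPartitionable

variable {V : Type} [DecidableEq V] {G : SimpleGraph V}

theorem IsRP.preconnected {A : Finset V} (hA : G.IsRP A) :
    (G.induce (A : Set V)).Preconnected := by
  rw [IsRP] at hA
  rcases hA with hA | ⟨hA, -⟩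
  · obtain ⟨a, rfl⟩ := card_eq_one.1 hA
    have : Subsingleton (({a} : Finset V) : Set V) := by rw [coe_singleton]; infer_instance
    exact Preconnected.of_subsingleton
  · exact hA.preconnected

theorem IsRP.exists_disjoint_union {A : Finset V} (hA : G.IsRP A) {k : ℕ} (hk : 0 < k)
    (hkA : k < #A) :
    ∃ B C, Disjoint B C ∧ B ∪ C = A ∧ #B = k ∧ G.IsRP B ∧ G.IsRP C := by
  rw [IsRP] at hA
  obtain hA | ⟨-, hpart⟩ := hA
  · omega
  obtain ⟨P, hcard, hdisj, hunion, hRP⟩ := hpart [k, #A - k] (by simp; omega) (by simp)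
    (by simp; omega)
  obtain ⟨B, C, rfl⟩ := List.length_eq_two.1 (by simpa using congrArg List.length hcard)
  simp only [List.map_cons, List.map_nil, List.cons.injEq, and_true] at hcard
  simp only [List.foldr_cons, List.foldr_nil, union_empty] at hunion
  exact ⟨B, C, List.pairwise_pair.1 hdisj, hunion, hcard.1, hRP B (by simp) (by omega),
    hRP C (by simp) (by omega)⟩

theorem IsRP.numComponentsOn_sdiff_le [Finite V] {A : Finset V} (hA : G.IsRP A) {S : Finset V}
    (hS : (A ∩ S).Nonempty) : G.numComponentsOn (A \ S) ≤ 3 * #(A ∩ S) := by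
  have hSA := card_sdiff_add_card_inter A S
  by_cases hsmall : G.numComponentsOn (A \ S) ≤ 3
  · have := hS.card_pos
    omega
  obtain ⟨M, k, hM, hk, hkA, hkK⟩ :=
    exists_card_componentFinset_ne (n := #A) (by have := hS.card_pos; omega) (not_le.1 hsmall)
  obtain ⟨B, C, hBC, rfl, rfl, hB, hC⟩ := hA.exists_disjoint_union hk (by omega)
  have hBCcard := card_union_of_disjoint hBC
  have hCS : (C ∩ S).Nonempty := by
    refine not_disjoint_iff_nonempty_inter.1 fun hCS => ?_
    have := card_le_of_preconnected_subset (subset_sdiff.2 ⟨subset_union_right, hCS⟩)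
      hC.preconnected hM
    omega
  by_cases hBS : Disjoint B S
  · have hsdiff : (B ∪ C) \ S = B ∪ C \ S := by
      rw [union_sdiff_distrib, sdiff_eq_self_of_disjoint hBS]
    rw [hsdiff] at hkK ⊢
    calc G.numComponentsOn (B ∪ C \ S)
        ≤ G.numComponentsOn (C \ S) :=
          numComponentsOn_union_le_of_preconnected hB.preconnected fun K h => hkK K (by rw [h])
      _ ≤ 3 * #(C ∩ S) := hC.numComponentsOn_sdiff_le hCS
      _ ≤ 3 * #((B ∪ C) ∩ S) := by gcongr; exact subset_union_right
  · calc G.numComponentsOn ((B ∪ C) \ S)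
        ≤ G.numComponentsOn (B \ S) + G.numComponentsOn (C \ S) := by
          rw [union_sdiff_distrib]; exact numComponentsOn_union_le _ _
      _ ≤ 3 * #(B ∩ S) + 3 * #(C ∩ S) :=
          add_le_add (hB.numComponentsOn_sdiff_le (not_disjoint_iff_nonempty_inter.1 hBS))
            (hC.numComponentsOn_sdiff_le hCS)
      _ = 3 * #((B ∪ C) ∩ S) := by
          rw [union_inter_distrib_right,
            card_union_of_disjoint (hBC.mono inter_subset_left inter_subset_left), mul_add]
termination_by #A
decreasing_by all_goals subst_vars; omega

end RecursivelyPartitionable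

end SimpleGraph

/-- Every recursively partitionable graph is `1/3`-tough: for every vertex subset `S` with
`c(G − S) ≥ 2` one has `|S| ≥ c(G − S) / 3`. -/
theorem isRP_one_third_tough {V : Type} [Fintype V] [DecidableEq V]
    (G : SimpleGraph V) (hG : G.IsRP Finset.univ) (S : Finset V)
    (hc : 2 ≤ Nat.card (G.induce ((↑S : Set V)ᶜ)).ConnectedComponent) :
    ((Nat.card (G.induce ((↑S : Set V)ᶜ)).ConnectedComponent : ℚ)) / 3 ≤ (S.card : ℚ) := by
  have hcompl : ((univ \ S : Finset V) : Set V) = (↑S)ᶜ := by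
    rw [coe_sdiff, coe_univ, Set.compl_eq_univ_sdiff]
  have hS : S.Nonempty := by
    rw [nonempty_iff_ne_empty]
    rintro rfl
    have := SimpleGraph.numComponentsOn_le_one hG.preconnected
    rw [SimpleGraph.numComponentsOn, coe_univ] at this
    rw [coe_empty, Set.compl_empty] at hc
    omega
  have := hG.numComponentsOn_sdiff_le (S := S) (by rwa [univ_inter])
  rw [SimpleGraph.numComponentsOn, hcompl, univ_inter] at this
  rw [div_le_iff₀ (by norm_num)]
  exact_mod_cast (by omega : _ ≤ #S * 3)
end
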